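/- arXiv:1705.04188 — 2 statements merged into one kernel-verified Lean document; each statement's English description precedes it below -/
import Mathlib

section
/- Let A_0, …, A_s ∈ M_m(K[t]), b ∈ K[t]^m and ν ∈ ℕ, and assume the system (REC') is t-tail regular, i.e. λ(x) := det(Σ_{j=0}^s A_{j0} x^j) is not the zero polynomial. Let y ∈ K(t)^m be a solution of A_s·σ^s(y) + … + A_0·y = t^{−ν}·b, let d ∈ K[t] be a common denominator of y in lowest terms (the monic least common multiple of the denominators of the entries of y), and write d = g·t^n with g ∈ K[t], t ∤ g. Then n = 0, or n ≤ ν, or λ(q^{−n}) = 0. -/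
/-!
Write `y = z / (g tⁿ)` with `z` polynomial. Since `σʲ(t) = qʲ t`, the function
`tⁿ σʲ(y_k) = z_k(qʲ t) / (q^{jn} g(qʲ t))` has no pole at `t = 0`, where it takes the value
`q^{-jn} z_k(0) / g(0)`, while `tⁿ t^{-ν} b` vanishes at `0` when `n > ν`. Multiplying the
system by `tⁿ` and evaluating at `t = 0` thus gives `(Σⱼ q^{-jn} A_{j0}) z(0) = 0`. Finally
`z(0) ≠ 0`: otherwise `t` divides every numerator and `d / t` would be a smaller common
denominator.
-/

open Polynomial

lemma Polynomial.eval_zero_comp_C_mul_X {R : Type*} [CommSemiring R] (p : R[X]) (c : R) :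
    (p.comp (C c * X)).eval 0 = p.eval 0 := by
  simp [eval_comp]

namespace RatFunc

variable {K : Type*} [Field K]

lemma eval_denom_ne_zero_of_dvd_mul {x y z : RatFunc K} {a : K}
    (h : z.denom ∣ x.denom * y.denom)
    (hx : x.denom.eval a ≠ 0) (hy : y.denom.eval a ≠ 0) : z.denom.eval a ≠ 0 := fun hz =>
  mul_ne_zero hx hy <| by
    rw [← Polynomial.eval_mul]; exact eval_eq_zero_of_dvd_of_eval_eq_zero h hz

def regularAt (a : K) : Subring (RatFunc K) where
  carrier := {x | x.denom.eval a ≠ 0}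
  one_mem' := by simp
  zero_mem' := by simp
  mul_mem' hx hy := eval_denom_ne_zero_of_dvd_mul (denom_mul_dvd _ _) hx hy
  add_mem' hx hy := eval_denom_ne_zero_of_dvd_mul (denom_add_dvd _ _) hx hy
  neg_mem' {x} hx := fun h => hx <| eval_eq_zero_of_dvd_of_eval_eq_zero
    ((denom_dvd (denom_ne_zero x)).mpr ⟨-x.num, by rw [map_neg, neg_div, num_div_denom]⟩) h

lemma mem_regularAt {a : K} {x : RatFunc K} : x ∈ regularAt a ↔ x.denom.eval a ≠ 0 := Iff.rfl

lemma algebraMap_mem_regularAt (a : K) (p : K[X]) :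
    algebraMap K[X] (RatFunc K) p ∈ regularAt a := by
  simp [mem_regularAt]

lemma algebraMap_div_mem_regularAt {a : K} (p : K[X]) {r : K[X]} (hr : r.eval a ≠ 0) :
    algebraMap K[X] (RatFunc K) p / algebraMap _ _ r ∈ regularAt a :=
  fun h => hr (eval_eq_zero_of_dvd_of_eval_eq_zero (denom_div_dvd p r) h)

lemma eval_algebraMap_div {a : K} (p : K[X]) {r : K[X]} (hr : r.eval a ≠ 0) :
    (algebraMap K[X] (RatFunc K) p / algebraMap _ _ r).eval (RingHom.id K) a
      = p.eval a / r.eval a := by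
  set x := algebraMap K[X] (RatFunc K) p / algebraMap _ _ r
  have hx : x.num * r = p * x.denom :=
    (num_mul_eq_mul_denom_iff (fun h => hr (by simp [h]))).mpr rfl
  have hxa : x.denom.eval a ≠ 0 := algebraMap_div_mem_regularAt p hr
  rw [RatFunc.eval, eval₂_id, eval₂_id, div_eq_div_iff hxa hr]
  simpa only [eval₂_id, Polynomial.eval_mul] using congrArg (Polynomial.eval a) hx

lemma eval_sum_of_mem {ι : Type*} {a : K} {s : Finset ι} {x : ι → RatFunc K}
    (hx : ∀ i ∈ s, x i ∈ regularAt a) :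
    (∑ i ∈ s, x i).eval (RingHom.id K) a = ∑ i ∈ s, (x i).eval (RingHom.id K) a := by
  classical
  induction s using Finset.induction_on with
  | empty => simp
  | insert i s hi ih =>
    rw [Finset.forall_mem_insert] at hx
    rw [Finset.sum_insert hi, Finset.sum_insert hi, eval_add _ _ hx.1 _, ih hx.2]
    exact (regularAt a).sum_mem hx.2

lemma algHom_apply_algebraMap {φ : RatFunc K →ₐ[K] RatFunc K} {r : K[X]}
    (hφ : φ X = algebraMap K[X] (RatFunc K) r) (p : K[X]) :
    φ (algebraMap K[X] (RatFunc K) p) = algebraMap K[X] (RatFunc K) (p.comp r) := by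
  rw [← aeval_X_left_eq_algebraMap, ← Polynomial.aeval_algHom_apply, hφ,
    Polynomial.aeval_algebraMap_apply, comp_eq_aeval]

lemma X_pow_mul_algHom_apply_div {φ : RatFunc K →ₐ[K] RatFunc K} {c : K}
    (hφ : φ X = C c * X) (z g : K[X]) (n : ℕ) :
    X ^ n * φ (algebraMap K[X] (RatFunc K) z / algebraMap _ _ (g * Polynomial.X ^ n))
      = algebraMap K[X] (RatFunc K) (z.comp (Polynomial.C c * Polynomial.X)) /
          algebraMap _ _ (g.comp (Polynomial.C c * Polynomial.X) * Polynomial.C (c ^ n)) := by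
  have hφ' : φ X = algebraMap K[X] (RatFunc K) (Polynomial.C c * Polynomial.X) := by
    rw [hφ, map_mul, algebraMap_C, algebraMap_X]
  rw [map_div₀, algHom_apply_algebraMap hφ', algHom_apply_algebraMap hφ', mul_comp, X_pow_comp,
    mul_pow, ← C_pow]
  simp only [map_mul, map_pow, algebraMap_C, algebraMap_X]
  conv_rhs => rw [← mul_div_mul_right _ _ (pow_ne_zero n X_ne_zero)]
  ring

lemma pow_algEquiv_X {σ : RatFunc K ≃ₐ[K] RatFunc K} {q : K}
    (hσ : σ X = C q * X) (j : ℕ) : (σ ^ j) X = C (q ^ j) * X := by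
  induction j with
  | zero => simp
  | succ j ih =>
    rw [pow_succ, AlgEquiv.mul_apply, hσ, map_mul, ih, ← algebraMap_eq_C, AlgEquiv.commutes,
      algebraMap_eq_C, pow_succ, map_mul]
    ring

lemma X_pow_mul_algHom_apply_div_mem_regularAt {φ : RatFunc K →ₐ[K] RatFunc K} {c : K}
    (hφ : φ X = C c * X) (hc : c ≠ 0) (z : K[X]) {g : K[X]} (hg : g.eval 0 ≠ 0) (n : ℕ) :
    X ^ n * φ (algebraMap K[X] (RatFunc K) z / algebraMap _ _ (g * Polynomial.X ^ n))
      ∈ regularAt 0 := by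
  rw [X_pow_mul_algHom_apply_div hφ]
  refine algebraMap_div_mem_regularAt _ ?_
  rw [Polynomial.eval_mul, Polynomial.eval_C, Polynomial.eval_zero_comp_C_mul_X]
  exact mul_ne_zero hg (pow_ne_zero n hc)

lemma eval_X_pow_mul_algHom_apply_div {φ : RatFunc K →ₐ[K] RatFunc K} {c : K}
    (hφ : φ X = C c * X) (hc : c ≠ 0) (z : K[X]) {g : K[X]} (hg : g.eval 0 ≠ 0) (n : ℕ) :
    (X ^ n * φ (algebraMap K[X] (RatFunc K) z / algebraMap _ _ (g * Polynomial.X ^ n))).eval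
      (RingHom.id K) 0 = (c ^ n)⁻¹ * z.eval 0 / g.eval 0 := by
  have hden : (g.comp (Polynomial.C c * Polynomial.X) * Polynomial.C (c ^ n)).eval 0 ≠ 0 := by
    rw [Polynomial.eval_mul, Polynomial.eval_C, Polynomial.eval_zero_comp_C_mul_X]
    exact mul_ne_zero hg (pow_ne_zero n hc)
  rw [X_pow_mul_algHom_apply_div hφ, eval_algebraMap_div _ hden, Polynomial.eval_mul,
    Polynomial.eval_C, Polynomial.eval_zero_comp_C_mul_X, Polynomial.eval_zero_comp_C_mul_X]
  field_simp

lemma X_pow_mul_sum_mulVec_apply {ι : Type*} [Fintype ι] {S : Finset ℕ}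
    {M : ℕ → Matrix ι ι (RatFunc K)} {v : ℕ → ι → RatFunc K} {b : ι → K[X]} {ν n : ℕ}
    (hνn : ν ≤ n)
    (h : ∑ j ∈ S, (M j).mulVec (v j) = fun i => algebraMap K[X] _ (b i) / X ^ ν) (i : ι) :
    ∑ j ∈ S, ∑ k, M j i k * (X ^ n * v j k)
      = algebraMap K[X] _ (Polynomial.X ^ (n - ν) * b i) := by
  have h' := congrArg (X ^ n * ·) (congrFun h i)
  simp only [Matrix.mulVec, dotProduct, Finset.sum_apply, Finset.mul_sum,
    mul_left_comm (X ^ n)] at h'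
  rw [h', map_mul, map_pow, algebraMap_X, ← Nat.sub_add_cancel hνn, pow_add,
    Nat.add_sub_cancel, mul_assoc, mul_div_cancel₀ _ (pow_ne_zero ν X_ne_zero)]

section lcm

variable [DecidableEq K] {ι : Type*} [Fintype ι]

lemma lcm_denom_ne_zero (y : ι → RatFunc K) : (Finset.univ.lcm fun i => (y i).denom) ≠ 0 :=
  fun h => by
    obtain ⟨i, -, hi⟩ := Finset.lcm_eq_zero_iff.mp h
    exact denom_ne_zero (y i) hi

lemma exists_num_over_lcm_denom (y : ι → RatFunc K) : ∃ z : ι → K[X], ∀ i,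
    y i = algebraMap K[X] (RatFunc K) (z i) /
      algebraMap _ _ (Finset.univ.lcm fun i => (y i).denom) := by
  choose z hz using fun i => (denom_dvd (lcm_denom_ne_zero y)).mp
    (Finset.dvd_lcm (f := fun i => (y i).denom) (Finset.mem_univ i))
  exact ⟨z, hz⟩

lemma isUnit_of_dvd_num_over_lcm_denom {y : ι → RatFunc K} {z : ι → K[X]} {r d : K[X]}
    (hd : r * d = Finset.univ.lcm fun i => (y i).denom)
    (hz : ∀ i, y i = algebraMap K[X] (RatFunc K) (z i) / algebraMap _ _ (r * d))
    (hr : ∀ i, r ∣ z i) : IsUnit r := by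
  have hrd : r * d ≠ 0 := hd ▸ lcm_denom_ne_zero y
  have hdvd : r * d ∣ 1 * d := by
    rw [one_mul, hd]
    refine Finset.lcm_dvd fun i _ => (denom_dvd (right_ne_zero_of_mul hrd)).mpr ?_
    obtain ⟨w, hw⟩ := hr i
    refine ⟨w, ?_⟩
    rw [hz i, hw, map_mul, map_mul,
      mul_div_mul_left _ _ (algebraMap_ne_zero (left_ne_zero_of_mul hrd))]
  exact isUnit_of_dvd_one ((mul_dvd_mul_iff_right (right_ne_zero_of_mul hrd)).mp hdvd)

end lcm

end RatFunc

lemma Matrix.eval_det_sum_X_pow_smul_map_C {R : Type*} [CommRing R] {m : Type*} [Fintype m]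
    [DecidableEq m] (B : ℕ → Matrix m m R) (S : Finset ℕ) (u : R) :
    (∑ j ∈ S, (X : R[X]) ^ j • (B j).map C).det.eval u = (∑ j ∈ S, u ^ j • B j).det := by
  rw [← coe_evalRingHom, RingHom.map_det]
  congr 1
  ext i k
  simp only [RingHom.mapMatrix_apply, Matrix.map_apply, Matrix.sum_apply, Matrix.smul_apply,
    coe_evalRingHom, eval_finsetSum, smul_eq_mul, eval_mul, eval_pow, eval_X, eval_C]

lemma tail_mulVec_eval_zero_eq_zero {K : Type*} [Field K] {q : K} (hq0 : q ≠ 0)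
    {σ : RatFunc K ≃ₐ[K] RatFunc K} (hσ : σ RatFunc.X = RatFunc.C q * RatFunc.X)
    {m s ν n : ℕ} (hνn : ν < n) (A : ℕ → Matrix (Fin m) (Fin m) K[X]) (b : Fin m → K[X])
    (z : Fin m → K[X]) {g : K[X]} (hg : g.eval 0 ≠ 0)
    (hsol : ∑ j ∈ Finset.range (s + 1), ((A j).map (algebraMap K[X] (RatFunc K))).mulVec
        (fun k => (σ ^ j) (algebraMap K[X] (RatFunc K) (z k) / algebraMap _ _ (g * X ^ n)))
      = fun i => algebraMap K[X] (RatFunc K) (b i) / RatFunc.X ^ ν) :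
    (∑ j ∈ Finset.range (s + 1), ((q ^ n)⁻¹) ^ j • (A j).map (eval 0)).mulVec
      (fun k => (z k).eval 0) = 0 := by
  set Y : ℕ → Fin m → RatFunc K := fun j k =>
    RatFunc.X ^ n * (σ ^ j) (algebraMap K[X] (RatFunc K) (z k) / algebraMap _ _ (g * X ^ n))
  have hYmem : ∀ j k, Y j k ∈ RatFunc.regularAt 0 := fun j k =>
    RatFunc.X_pow_mul_algHom_apply_div_mem_regularAt (φ := (σ ^ j).toAlgHom)
      (RatFunc.pow_algEquiv_X hσ j) (pow_ne_zero j hq0) _ hg n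
  have hterm : ∀ i j k, algebraMap K[X] (RatFunc K) (A j i k) * Y j k ∈ RatFunc.regularAt 0 :=
    fun i j k => mul_mem (RatFunc.algebraMap_mem_regularAt _ _) (hYmem j k)
  have hYeval : ∀ j k,
      (Y j k).eval (RingHom.id K) 0 = (q ^ n)⁻¹ ^ j * (z k).eval 0 / g.eval 0 :=
    fun j k => (RatFunc.eval_X_pow_mul_algHom_apply_div (φ := (σ ^ j).toAlgHom)
      (RatFunc.pow_algEquiv_X hσ j) (pow_ne_zero j hq0) _ hg n).trans <| by
        rw [← pow_mul, inv_pow, ← pow_mul, mul_comm j n]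
  funext i
  have hrow : ∑ j ∈ Finset.range (s + 1), ∑ k, algebraMap K[X] (RatFunc K) (A j i k) * Y j k
      = algebraMap K[X] (RatFunc K) (X ^ (n - ν) * b i) :=
    RatFunc.X_pow_mul_sum_mulVec_apply hνn.le hsol i
  calc _ = g.eval 0 * ∑ j ∈ Finset.range (s + 1), ∑ k,
        (A j i k).eval 0 * ((q ^ n)⁻¹ ^ j * (z k).eval 0 / g.eval 0) := by
        simp only [Matrix.mulVec, dotProduct, Matrix.sum_apply, Matrix.smul_apply,
          Matrix.map_apply, smul_eq_mul, Finset.sum_mul, Finset.mul_sum]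
        rw [Finset.sum_comm]
        refine Finset.sum_congr rfl fun j _ => Finset.sum_congr rfl fun k _ => ?_
        field_simp
    _ = g.eval 0 *
          (algebraMap K[X] (RatFunc K) (X ^ (n - ν) * b i)).eval (RingHom.id K) 0 := by
        rw [← hrow, RatFunc.eval_sum_of_mem fun j _ => sum_mem fun k _ => hterm i j k]
        congr 1
        refine Finset.sum_congr rfl fun j _ => ?_
        rw [RatFunc.eval_sum_of_mem fun k _ => hterm i j k]
        refine Finset.sum_congr rfl fun k _ => ?_
        rw [RatFunc.eval_mul _ _ (RatFunc.algebraMap_mem_regularAt _ _) (hYmem j k), hYeval,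
          RatFunc.eval_algebraMap, Algebra.algebraMap_self_apply, eval₂_id]
    _ = 0 := by
        rw [RatFunc.eval_algebraMap, Algebra.algebraMap_self_apply, eval₂_id, eval_mul, eval_pow,
          eval_X, zero_pow (Nat.sub_ne_zero_of_lt hνn), zero_mul, mul_zero]

theorem t_power_denominator_bound_general
    (K : Type*) [Field K] [DecidableEq K]
    (q : K) (hq0 : q ≠ 0)
    (σ : RatFunc K ≃ₐ[K] RatFunc K) (hσ : σ RatFunc.X = RatFunc.C q * RatFunc.X)
    (m s ν : ℕ)
    (A : ℕ → Matrix (Fin m) (Fin m) K[X]) (b : Fin m → K[X])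
    (lam : K[X])
    (hlam : lam = Matrix.det (∑ j ∈ Finset.range (s + 1),
      (X : K[X]) ^ j • ((A j).map fun p => Polynomial.C (p.eval 0))))
    (y : Fin m → RatFunc K)
    (hsol : ∑ j ∈ Finset.range (s + 1),
        ((A j).map (algebraMap K[X] (RatFunc K))).mulVec (fun i => (σ ^ j) (y i))
      = fun i => algebraMap K[X] (RatFunc K) (b i) / RatFunc.X ^ ν)
    (d g : K[X]) (n : ℕ)
    (hd : d = Finset.univ.lcm fun i => (y i).denom)
    (hdgn : d = g * X ^ n)
    (htg : ¬ (X : K[X]) ∣ g) :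
    n = 0 ∨ n ≤ ν ∨ lam.eval ((q ^ n)⁻¹) = 0 := by
  rcases Nat.eq_zero_or_pos n with hn | hn
  · exact Or.inl hn
  rcases le_or_gt n ν with hnν | hνn
  · exact Or.inr (Or.inl hnν)
  refine Or.inr (Or.inr ?_)
  obtain ⟨z, hz⟩ := RatFunc.exists_num_over_lcm_denom y
  rw [← hd, hdgn] at hz
  have hXd : X * (g * X ^ (n - 1)) = g * X ^ n := by
    rw [mul_left_comm, ← pow_succ', Nat.sub_add_cancel hn]
  have hc : (fun k => (z k).eval 0) ≠ 0 := fun h0 => not_isUnit_X <|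
    RatFunc.isUnit_of_dvd_num_over_lcm_denom (by rw [hXd, ← hdgn, hd]) (hXd ▸ hz)
      fun k => X_dvd_iff.mpr (by rw [coeff_zero_eq_eval_zero]; exact congrFun h0 k)
  have hg : g.eval 0 ≠ 0 := fun h => htg (X_dvd_iff.mpr (by rwa [coeff_zero_eq_eval_zero]))
  have hM := tail_mulVec_eval_zero_eq_zero hq0 hσ hνn A b z hg (by simpa only [hz] using hsol)
  rw [hlam]
  exact (Matrix.eval_det_sum_X_pow_smul_map_C (fun j => (A j).map (eval 0)) _ _).trans
    (Matrix.exists_mulVec_eq_zero_iff.mp ⟨_, hc, hM⟩)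

/-- **Denominator bound for the power of `t`** (Theorem `thm:deg.bound`).
`K` is a field of characteristic zero, `q ≠ 0` is not a root of unity, and `σ` is the
`K`-algebra automorphism of `K(t)` with `σ(t) = q·t`.  If the system
`A_s σ^s(y) + ⋯ + A_0 y = t^{-ν} b` is `t`-tail regular (`λ ≠ 0`), `y` is a rational
solution, `d` is the monic least common multiple of the denominators of the entries of
`y`, and `d = g·tⁿ` with `t ∤ g`, then `n = 0`, or `n ≤ ν`, or `λ(q^{-n}) = 0`. -/
theorem t_power_denominator_bound
    (K : Type*) [Field K] [CharZero K] [DecidableEq K]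
    (q : K) (hq0 : q ≠ 0) (hqru : ∀ k : ℕ, 0 < k → q ^ k ≠ 1)
    (σ : RatFunc K ≃ₐ[K] RatFunc K) (hσ : σ RatFunc.X = RatFunc.C q * RatFunc.X)
    (m s ν : ℕ)
    (A : ℕ → Matrix (Fin m) (Fin m) K[X]) (b : Fin m → K[X])
    (lam : K[X])
    (hlam : lam = Matrix.det (∑ j ∈ Finset.range (s + 1),
      (X : K[X]) ^ j • ((A j).map fun p => Polynomial.C (p.eval 0))))
    (hreg : lam ≠ 0)
    (y : Fin m → RatFunc K)
    (hsol : ∑ j ∈ Finset.range (s + 1),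
        ((A j).map (algebraMap K[X] (RatFunc K))).mulVec (fun i => (σ ^ j) (y i))
      = fun i => algebraMap K[X] (RatFunc K) (b i) / RatFunc.X ^ ν)
    (d g : K[X]) (n : ℕ)
    (hd : d = Finset.univ.lcm fun i => (y i).denom)
    (hdgn : d = g * X ^ n)
    (htg : ¬ (X : K[X]) ∣ g) :
    n = 0 ∨ n ≤ ν ∨ lam.eval ((q ^ n)⁻¹) = 0 :=
  t_power_denominator_bound_general K q hq0 σ hσ m s ν A b lam hlam y hsol d g n hd hdgn htg
end

section
/- Let A_0, …, A_s ∈ M_m(K[t]), b ∈ K[t]^m and ν ∈ ℕ. Suppose y ∈ K(t)^m solves A_s·σ^s(y) + … + A_0·y = t^{−ν}·b, and suppose y = u/g + v/t^n with u, v ∈ K[t]^m, g ∈ K[t] nonzero, t ∤ g, and n > ν. Then t divides every entry of the polynomial vector Σ_{j=0}^s q^{−n·j}·A_j·σ^j(v). -/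
/-!
After multiplying the equation by `tⁿ` and using `σʲ(t) = qʲ t`, the polynomial in question
becomes `t^(n-ν) b` minus a sum of terms `tⁿ p / σʲ(g)` with `p` polynomial. Since `σʲ(g)` has the
same nonzero constant term as `g`, each of these has `t`-adic valuation `< 1`, hence so does the
polynomial, i.e. `t` divides it.
-/

open Polynomial

namespace Polynomial
variable {K : Type*} [Field K]

theorem X_dvd_comp_C_mul_X_iff (p : K[X]) (c : K) : X ∣ p.comp (C c * X) ↔ X ∣ p := by
  simp [X_dvd_iff, coeff_zero_eq_eval_zero, eval_comp]

theorem valuation_idealX_lt_one_iff (p : K[X]) :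
    (idealX K).valuation (RatFunc K) (algebraMap K[X] (RatFunc K) p) < 1 ↔ X ∣ p := by
  rw [IsDedekindDomain.HeightOneSpectrum.valuation_lt_one_iff_mem, idealX_span,
    Ideal.mem_span_singleton]

theorem valuation_idealX_eq_one_iff (p : K[X]) :
    (idealX K).valuation (RatFunc K) (algebraMap K[X] (RatFunc K) p) = 1 ↔ ¬ X ∣ p := by
  rw [IsDedekindDomain.HeightOneSpectrum.valuation_eq_one_iff_notMem, idealX_span,
    Ideal.mem_span_singleton]

theorem valuation_idealX_X_pow_mul_lt_one {k : ℕ} (hk : k ≠ 0) (p : K[X]) :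
    (idealX K).valuation (RatFunc K) (RatFunc.X ^ k * algebraMap K[X] (RatFunc K) p) < 1 := by
  rw [← RatFunc.algebraMap_X, ← map_pow, ← map_mul, valuation_idealX_lt_one_iff]
  exact (dvd_pow_self X hk).mul_right _

theorem valuation_idealX_X_pow_mul_div_lt_one {k : ℕ} (hk : k ≠ 0) (p : K[X]) {d : K[X]}
    (hd : ¬ X ∣ d) :
    (idealX K).valuation (RatFunc K)
      (RatFunc.X ^ k * algebraMap K[X] (RatFunc K) p / algebraMap K[X] (RatFunc K) d) < 1 := by
  rw [map_div₀, (valuation_idealX_eq_one_iff d).2 hd, div_one]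
  exact valuation_idealX_X_pow_mul_lt_one hk p

end Polynomial

namespace RatFunc
variable {K : Type*} [Field K]

theorem pow_apply_X_of_apply_X {σ : RatFunc K ≃ₐ[K] RatFunc K} {c : K} (hσ : σ X = C c * X)
    (j : ℕ) : (σ ^ j) X = C (c ^ j) * X := by
  induction j with
  | zero => simp
  | succ j ih =>
    rw [pow_succ', AlgEquiv.mul_apply, ih, map_mul, hσ, ← algebraMap_eq_C, AlgEquiv.commutes,
      algebraMap_eq_C, pow_succ, map_mul, mul_assoc]

section Dilation
variable {F : Type*} [FunLike F (RatFunc K) (RatFunc K)] [AlgHomClass F K (RatFunc K) (RatFunc K)]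
  {f : F} {c : K}

theorem apply_algebraMap_of_apply_X (hf : f X = C c * X) (p : K[X]) :
    f (algebraMap K[X] (RatFunc K) p)
      = algebraMap K[X] (RatFunc K) (p.comp (Polynomial.C c * Polynomial.X)) := by
  rw [← aeval_X_left_eq_algebraMap, ← aeval_X_left_eq_algebraMap, ← aeval_algHom_apply, hf,
    aeval_comp]
  simp

theorem X_pow_mul_apply_div_add_div_X_pow (hc : c ≠ 0) (hf : f X = C c * X) (u g w : K[X])
    (n : ℕ) :
    X ^ n * f (algebraMap K[X] (RatFunc K) u / algebraMap K[X] (RatFunc K) g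
        + algebraMap K[X] (RatFunc K) w / X ^ n)
      = X ^ n * algebraMap K[X] (RatFunc K) (u.comp (Polynomial.C c * Polynomial.X))
          / algebraMap K[X] (RatFunc K) (g.comp (Polynomial.C c * Polynomial.X))
        + C (c ^ n)⁻¹ * algebraMap K[X] (RatFunc K) (w.comp (Polynomial.C c * Polynomial.X)) := by
  rw [map_add, map_div₀, map_div₀, map_pow, hf, apply_algebraMap_of_apply_X hf,
    apply_algebraMap_of_apply_X hf, apply_algebraMap_of_apply_X hf, map_inv₀, map_pow]
  have hC : C c ≠ 0 := by simpa using hc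
  field_simp [X_ne_zero]
  ring

end Dilation

end RatFunc

theorem t_dvd_trailing_combination_general
    (K : Type*) [Field K]
    (q : K) (hq0 : q ≠ 0)
    (σ : RatFunc K ≃ₐ[K] RatFunc K) (hσ : σ RatFunc.X = RatFunc.C q * RatFunc.X)
    (m s ν : ℕ)
    (A : ℕ → Matrix (Fin m) (Fin m) K[X]) (b : Fin m → K[X])
    (y : Fin m → RatFunc K)
    (hsol : ∑ j ∈ Finset.range (s + 1),
        ((A j).map (algebraMap K[X] (RatFunc K))).mulVec (fun i => (σ ^ j) (y i))
      = fun i => algebraMap K[X] (RatFunc K) (b i) / RatFunc.X ^ ν)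
    (u v : Fin m → K[X]) (g : K[X]) (htg : ¬ (X : K[X]) ∣ g)
    (n : ℕ) (hn : ν < n)
    (hy : y = fun i => algebraMap K[X] (RatFunc K) (u i) / algebraMap K[X] (RatFunc K) g
      + algebraMap K[X] (RatFunc K) (v i) / RatFunc.X ^ n) :
    ∀ i : Fin m, (X : K[X]) ∣
      (∑ j ∈ Finset.range (s + 1), (q ^ (n * j))⁻¹ •
        (A j).mulVec fun i' => (v i').comp (Polynomial.C (q ^ j) * X)) i := by
  intro i
  have hterm (j : ℕ) (i' : Fin m) :
      algebraMap K[X] (RatFunc K) ((q ^ (n * j))⁻¹ • (A j i i' * (v i').comp (C (q ^ j) * X)))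
        = RatFunc.X ^ n * (algebraMap K[X] (RatFunc K) (A j i i') * (σ ^ j) (y i'))
          - RatFunc.X ^ n * algebraMap K[X] (RatFunc K) (A j i i' * (u i').comp (C (q ^ j) * X))
            / algebraMap K[X] (RatFunc K) (g.comp (C (q ^ j) * X)) := by
    have h := RatFunc.X_pow_mul_apply_div_add_div_X_pow (pow_ne_zero j hq0)
      (RatFunc.pow_apply_X_of_apply_X hσ j) (u i') g (v i') n
    rw [← pow_mul, mul_comm j n] at h
    rw [hy, smul_eq_C_mul, map_mul, map_mul, map_mul, RatFunc.algebraMap_C]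
    linear_combination (-algebraMap K[X] (RatFunc K) (A j i i')) * h
  have hrow : ∑ j ∈ Finset.range (s + 1), ∑ i',
      algebraMap K[X] (RatFunc K) (A j i i') * (σ ^ j) (y i')
        = algebraMap K[X] (RatFunc K) (b i) / RatFunc.X ^ ν := by
    simpa only [Finset.sum_apply, Matrix.mulVec, dotProduct, Matrix.map_apply] using
      congrFun hsol i
  have hlead : RatFunc.X ^ n * (algebraMap K[X] (RatFunc K) (b i) / RatFunc.X ^ ν)
      = RatFunc.X ^ (n - ν) * algebraMap K[X] (RatFunc K) (b i) := by
    rw [pow_sub₀ _ RatFunc.X_ne_zero hn.le]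
    ring
  have hgj (j : ℕ) : ¬ X ∣ g.comp (C (q ^ j) * X) := (X_dvd_comp_C_mul_X_iff g _).not.2 htg
  rw [← valuation_idealX_lt_one_iff]
  simp only [Finset.sum_apply, Pi.smul_apply, Matrix.mulVec, dotProduct, Finset.smul_sum, map_sum,
    hterm, Finset.sum_sub_distrib, ← Finset.mul_sum, hrow, hlead]
  exact Valuation.map_sub_lt _ (valuation_idealX_X_pow_mul_lt_one (by omega) _)
    (Valuation.map_sum_lt _ one_ne_zero fun j _ ↦ Valuation.map_sum_lt _ one_ne_zero fun i' _ ↦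
      valuation_idealX_X_pow_mul_div_lt_one (by omega) _ (hgj j))

/-- If `y = u/g + v/tⁿ` (with `t ∤ g`, `n > ν`) solves
`A_s σ^s(y) + ⋯ + A_0 y = t^{-ν} b`, then `t` divides every entry of the polynomial
vector `∑_{j=0}^s q^{-n·j}·A_j·σ^j(v)`.  Here `σ` is the `K`-algebra automorphism of
`K(t)` with `σ(t) = q·t`, and on polynomials `σ^j(v)(t) = v(q^j·t)` is realised by
`p ↦ p.comp (C (q^j) * X)`. -/
theorem t_dvd_trailing_combination
    (K : Type*) [Field K] [CharZero K]
    (q : K) (hq0 : q ≠ 0) (hqru : ∀ k : ℕ, 0 < k → q ^ k ≠ 1)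
    (σ : RatFunc K ≃ₐ[K] RatFunc K) (hσ : σ RatFunc.X = RatFunc.C q * RatFunc.X)
    (m s ν : ℕ)
    (A : ℕ → Matrix (Fin m) (Fin m) K[X]) (b : Fin m → K[X])
    (y : Fin m → RatFunc K)
    (hsol : ∑ j ∈ Finset.range (s + 1),
        ((A j).map (algebraMap K[X] (RatFunc K))).mulVec (fun i => (σ ^ j) (y i))
      = fun i => algebraMap K[X] (RatFunc K) (b i) / RatFunc.X ^ ν)
    (u v : Fin m → K[X]) (g : K[X]) (hg : g ≠ 0) (htg : ¬ (X : K[X]) ∣ g)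
    (n : ℕ) (hn : ν < n)
    (hy : y = fun i => algebraMap K[X] (RatFunc K) (u i) / algebraMap K[X] (RatFunc K) g
      + algebraMap K[X] (RatFunc K) (v i) / RatFunc.X ^ n) :
    ∀ i : Fin m, (X : K[X]) ∣
      (∑ j ∈ Finset.range (s + 1), (q ^ (n * j))⁻¹ •
        (A j).mulVec fun i' => (v i').comp (Polynomial.C (q ^ j) * X)) i :=
  t_dvd_trailing_combination_general K q hq0 σ hσ m s ν A b y hsol u v g htg n hn hy
end
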